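/- Let D be a dense subset of a band of topological groups S. Then for any open set U containing E(S), (UD)* = S and (DU)* = S. -/

import Mathlib

/-!
Fix `y`. Because `H_y` is open and the maps `d ↦ d⁻¹ y` and `d ↦ y d⁻¹` are continuous and
send `y` to the idempotent `y⁰ ∈ U`, the dense set `D` contains some `d ∈ H_y` with
`d⁻¹ y ∈ U`, i.e. `y ∈ (dU)*`, and some `d ∈ H_y` with `y d⁻¹ ∈ U`. For the latter, computing
in the group `H_y` gives `(y d⁻¹)⁻¹ y = d`, so `y ∈ ((y d⁻¹) D)*`.
-/

open Set TopologicalSpace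

/-- The principal left ideal (with `a` adjoined) generated by `a`: `{a} ∪ {s*a : s ∈ S}`. -/
def leftIdeal {S : Type*} [Semigroup S] (a : S) : Set S :=
  insert a {x | ∃ s, x = s * a}

/-- The principal right ideal (with `a` adjoined) generated by `a`: `{a} ∪ {a*s : s ∈ S}`. -/
def rightIdeal {S : Type*} [Semigroup S] (a : S) : Set S :=
  insert a {x | ∃ s, x = a * s}

/-- Green's relation ℋ on a semigroup. -/
def greenH {S : Type*} [Semigroup S] (a b : S) : Prop :=
  leftIdeal a = leftIdeal b ∧ rightIdeal a = rightIdeal b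

/-- The ℋ-class of an element. -/
def HClass {S : Type*} [Semigroup S] (x : S) : Set S := {y | greenH y x}

/-- A semigroup is completely regular if every element is completely regular. -/
def CompletelyRegularSemigroup (S : Type*) [Semigroup S] : Prop :=
  ∀ a : S, ∃ x, a = a * x * a ∧ a * x = x * a

/-- Green's relation ℋ is a congruence. -/
def HIsCongruence (S : Type*) [Semigroup S] : Prop :=
  ∀ a b c : S, greenH a b → greenH (a * c) (b * c) ∧ greenH (c * a) (c * b)

/-- A cryptogroup is a completely regular semigroup in which ℋ is a congruence. -/
def IsCryptogroup (S : Type*) [Semigroup S] : Prop :=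
  CompletelyRegularSemigroup S ∧ HIsCongruence S

/-- In a cryptogroup every ℋ-class is a group; `idp x` (written `x⁰`) is the identity of the
ℋ-class of `x`, and `inv x` (written `x⁻¹`) is the inverse of `x` inside its ℋ-class. -/
structure CryptoOps (S : Type*) [Semigroup S] where
  idp : S → S
  inv : S → S
  idp_mem : ∀ x, greenH (idp x) x
  idp_mul : ∀ x y, greenH y x → idp x * y = y
  mul_idp : ∀ x y, greenH y x → y * idp x = y
  inv_mem : ∀ x, greenH (inv x) x
  mul_inv : ∀ x, x * inv x = idp x
  inv_mul : ∀ x, inv x * x = idp x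

/-- The set `E(S)` of idempotents of a semigroup. -/
def idemSet (S : Type*) [Semigroup S] : Set S := {e | e * e = e}

/-- `(xU)* = {y ∈ S : x⁻¹*y ∈ U and x⁰ = y⁰}`. -/
def lstar {S : Type*} [Semigroup S] (ops : CryptoOps S) (x : S) (U : Set S) : Set S :=
  {y | ops.inv x * y ∈ U ∧ ops.idp x = ops.idp y}

/-- `(Ux)* = {y ∈ S : y*x⁻¹ ∈ U and x⁰ = y⁰}`. -/
def rstar {S : Type*} [Semigroup S] (ops : CryptoOps S) (U : Set S) (x : S) : Set S :=
  {y | y * ops.inv x ∈ U ∧ ops.idp x = ops.idp y}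

/-- `(AB)* = ⋃_{a ∈ A} (aB)*`. -/
def setStar {S : Type*} [Semigroup S] (ops : CryptoOps S) (A B : Set S) : Set S :=
  ⋃ a ∈ A, lstar ops a B

/-- A full subcryptogroup: contains all idempotents, and closed under multiplication
and inversion. -/
def IsFullSubcryptogroup {S : Type*} [Semigroup S] (ops : CryptoOps S) (K : Set S) : Prop :=
  idemSet S ⊆ K ∧ (∀ x ∈ K, ∀ y ∈ K, x * y ∈ K) ∧ (∀ x ∈ K, ops.inv x ∈ K)

section Green

variable {S : Type*} [Semigroup S]

theorem greenH.refl (a : S) : greenH a a := ⟨rfl, rfl⟩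

theorem greenH.symm {a b : S} (h : greenH a b) : greenH b a := ⟨h.1.symm, h.2.symm⟩

theorem greenH.trans {a b c : S} (hab : greenH a b) (hbc : greenH b c) : greenH a c :=
  ⟨hab.1.trans hbc.1, hab.2.trans hbc.2⟩

theorem leftIdeal_subset {a b : S} (h : ∃ s, a = s * b) : leftIdeal a ⊆ leftIdeal b := by
  obtain ⟨s, rfl⟩ := h
  rintro x (rfl | ⟨t, rfl⟩)
  · exact Or.inr ⟨s, rfl⟩
  · exact Or.inr ⟨t * s, (mul_assoc t s b).symm⟩

theorem rightIdeal_subset {a b : S} (h : ∃ s, a = b * s) : rightIdeal a ⊆ rightIdeal b := by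
  obtain ⟨s, rfl⟩ := h
  rintro x (rfl | ⟨t, rfl⟩)
  · exact Or.inr ⟨s, rfl⟩
  · exact Or.inr ⟨s * t, mul_assoc b s t⟩

theorem greenH_of_exists {a b : S} (hab : ∃ s, a = s * b) (hba : ∃ s, b = s * a)
    (hab' : ∃ s, a = b * s) (hba' : ∃ s, b = a * s) : greenH a b :=
  ⟨(leftIdeal_subset hab).antisymm (leftIdeal_subset hba),
    (rightIdeal_subset hab').antisymm (rightIdeal_subset hba')⟩

end Green

namespace CryptoOps

variable {S : Type*} [Semigroup S] (ops : CryptoOps S)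

theorem idp_mem_idemSet (x : S) : ops.idp x ∈ idemSet S :=
  ops.idp_mul x _ (ops.idp_mem x)

theorem idp_eq_of_greenH {a b : S} (h : greenH a b) : ops.idp a = ops.idp b :=
  calc ops.idp a = ops.idp a * ops.idp b :=
        (ops.mul_idp b _ ((ops.idp_mem a).trans h)).symm
    _ = ops.idp b := ops.idp_mul a _ ((ops.idp_mem b).trans h.symm)

theorem mul_greenH (ops : CryptoOps S) {a b y : S} (ha : greenH a y) (hb : greenH b y) :
    greenH (a * b) y := by
  have hay := ops.idp_eq_of_greenH ha
  have hby := ops.idp_eq_of_greenH hb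
  refine greenH_of_exists ⟨a * b * ops.inv y, ?_⟩ ⟨y * ops.inv b * ops.inv a, ?_⟩
    ⟨ops.inv y * a * b, ?_⟩ ⟨ops.inv b * ops.inv a * y, ?_⟩
  · rw [mul_assoc, ops.inv_mul, mul_assoc, ops.mul_idp y b hb]
  · rw [mul_assoc, ← mul_assoc (ops.inv a), ops.inv_mul, hay, ops.idp_mul y b hb, mul_assoc,
      ops.inv_mul, hby, ops.mul_idp y y (greenH.refl y)]
  · rw [← mul_assoc, ← mul_assoc, ops.mul_inv, ops.idp_mul y a ha]
  · simp only [mul_assoc]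
    rw [← mul_assoc b, ops.mul_inv, hby, ← mul_assoc, ops.mul_idp y a ha, ← mul_assoc,
      ops.mul_inv, hay, ops.idp_mul y y (greenH.refl y)]

theorem inv_eq_of_mul_eq_idp {u v : S} (hv : greenH v u) (h : u * v = ops.idp u) :
    ops.inv u = v :=
  calc ops.inv u = ops.inv u * (u * v) := by rw [h, ops.mul_idp u _ (ops.inv_mem u)]
    _ = v := by rw [← mul_assoc, ops.inv_mul, ops.idp_mul u v hv]

theorem inv_inv (x : S) : ops.inv (ops.inv x) = x :=
  ops.inv_eq_of_mul_eq_idp (ops.inv_mem x).symm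
    (by rw [ops.inv_mul, ops.idp_eq_of_greenH (ops.inv_mem x)])

theorem inv_mul_rev {a b y : S} (ha : greenH a y) (hb : greenH b y) :
    ops.inv (a * b) = ops.inv b * ops.inv a := by
  refine ops.inv_eq_of_mul_eq_idp
    ((ops.mul_greenH ((ops.inv_mem b).trans hb) ((ops.inv_mem a).trans ha)).trans
      (ops.mul_greenH ha hb).symm) ?_
  rw [mul_assoc, ← mul_assoc b, ops.mul_inv, ops.idp_eq_of_greenH hb, ← mul_assoc,
    ops.mul_idp y a ha, ops.mul_inv, ops.idp_eq_of_greenH ha, ops.idp_eq_of_greenH (ops.mul_greenH ha hb)]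

end CryptoOps

section Topology

variable {S : Type*} [Semigroup S] [TopologicalSpace S]

theorem Dense.exists_greenH_mem_preimage (hopen : ∀ x : S, IsOpen (HClass x)) {D : Set S}
    (hD : Dense D) {f : S → S} (hf : Continuous f) {U : Set S} (hU : IsOpen U) {y : S}
    (hy : f y ∈ U) : ∃ d ∈ D, greenH d y ∧ f d ∈ U :=
  hD.exists_mem_open ((hopen y).inter (hU.preimage hf)) ⟨y, greenH.refl y, hy⟩

variable [ContinuousMul S] (ops : CryptoOps S) {D U : Set S}

theorem setStar_open_dense_eq_univ (hinv : Continuous ops.inv)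
    (hopen : ∀ x : S, IsOpen (HClass x)) (hD : Dense D) (hU : IsOpen U)
    (hEU : idemSet S ⊆ U) : setStar ops U D = univ := by
  refine eq_univ_of_forall fun y => ?_
  obtain ⟨d, hdD, hdy, hdU⟩ := hD.exists_greenH_mem_preimage hopen
    (f := fun d => y * ops.inv d) (continuous_const.mul hinv) hU (show y * ops.inv y ∈ U from
      ops.mul_inv y ▸ hEU (ops.idp_mem_idemSet y))
  have hd' : greenH (ops.inv d) y := (ops.inv_mem d).trans hdy
  refine mem_biUnion hdU ⟨?_, ops.idp_eq_of_greenH (ops.mul_greenH (greenH.refl y) hd')⟩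
  rw [ops.inv_mul_rev (greenH.refl y) hd', ops.inv_inv, mul_assoc, ops.inv_mul,
    ← ops.idp_eq_of_greenH hdy, ops.mul_idp d d (greenH.refl d)]
  exact hdD

theorem setStar_dense_open_eq_univ (hinv : Continuous ops.inv)
    (hopen : ∀ x : S, IsOpen (HClass x)) (hD : Dense D) (hU : IsOpen U)
    (hEU : idemSet S ⊆ U) : setStar ops D U = univ := by
  refine eq_univ_of_forall fun y => ?_
  obtain ⟨d, hdD, hdy, hdU⟩ := hD.exists_greenH_mem_preimage hopen
    (f := fun d => ops.inv d * y) (hinv.mul continuous_const) hU (show ops.inv y * y ∈ U from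
      ops.inv_mul y ▸ hEU (ops.idp_mem_idemSet y))
  exact mem_biUnion hdD ⟨hdU, ops.idp_eq_of_greenH hdy⟩

end Topology

theorem stmt4_general {S : Type*} [Semigroup S] [TopologicalSpace S] [ContinuousMul S]
    (ops : CryptoOps S)
    (hinv : Continuous ops.inv) (hopen : ∀ x : S, IsOpen (HClass x))
    (D : Set S) (hD : Dense D)
    (U : Set S) (hU : IsOpen U) (hEU : idemSet S ⊆ U) :
    setStar ops U D = Set.univ ∧ setStar ops D U = Set.univ :=
  ⟨setStar_open_dense_eq_univ ops hinv hopen hD hU hEU,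
    setStar_dense_open_eq_univ ops hinv hopen hD hU hEU⟩

/-- If `D` is dense in a band of topological groups `S`, then for any open `U ⊇ E(S)`,
`(UD)* = S = (DU)*`. -/
theorem stmt4 {S : Type*} [Semigroup S] [TopologicalSpace S] [ContinuousMul S]
    (ops : CryptoOps S) (hcrypt : IsCryptogroup S)
    (hinv : Continuous ops.inv) (hopen : ∀ x : S, IsOpen (HClass x))
    (D : Set S) (hD : Dense D)
    (U : Set S) (hU : IsOpen U) (hEU : idemSet S ⊆ U) :
    setStar ops U D = Set.univ ∧ setStar ops D U = Set.univ :=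
  stmt4_general ops hinv hopen D hD U hU hEU
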